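/- Let I ⊆ ℝ be a nonempty interval, f, g : I → ℝ⁺ continuous bijections, and α₁, α₂, β₁, β₂ > 0. Suppose that for all x, y, z, w ∈ I: f⁻¹(α₁·f(g⁻¹(β₁·g(x) + β₂·g(y))) + α₂·f(g⁻¹(β₁·g(z) + β₂·g(w)))) = g⁻¹(β₁·g(f⁻¹(α₁·f(x) + α₂·f(z))) + β₂·g(f⁻¹(α₁·f(y) + α₂·f(w)))). Then there exists c > 0 such that f = c·g. -/

import Mathlib

/-!
Put φ = f ∘ g⁻¹ and χ = φ⁻¹ = g ∘ f⁻¹, mutually inverse self-maps of (0, ∞), and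
K(p, q) = φ(β₁ χ p + β₂ χ q), the g-mean read in f-coordinates. The hypothesis says exactly
K(α₁ p + α₂ r, α₁ q + α₂ s) = α₁ K(p, q) + α₂ K(r, s). This Pexider-type equation makes the
increments of K in each variable translation invariant, and K is monotone in each variable because
φ is strictly monotone (f and g are continuous injections on an interval), so Cauchy's equation
with monotonicity makes K affine. Substituting p = φ a, q = φ b gives
φ(β₁ a + β₂ b) = A + ν φ a + μ φ b, and the same argument makes φ affine. An affine bijection of
(0, ∞) is t ↦ c t with c > 0, that is, f = c g.
-/

open Set

theorem ContinuousOn.strictMonoOn_or_strictAntiOn_of_injOn {α δ : Type*}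
    [ConditionallyCompleteLinearOrder α] [DenselyOrdered α] [TopologicalSpace α] [OrderTopology α]
    [LinearOrder δ] [TopologicalSpace δ] [OrderClosedTopology δ] {f : α → δ} {s : Set α}
    (hs : s.OrdConnected) (hc : ContinuousOn f s) (hi : InjOn f s) :
    StrictMonoOn f s ∨ StrictAntiOn f s := by
  rcases s.eq_empty_or_nonempty with rfl | ⟨a, ha⟩
  · exact .inl fun _ h => h.elim
  have : Inhabited s := ⟨⟨a, ha⟩⟩
  exact (Continuous.strictMono_of_inj hc.domRestrict hi.injective).imp
    strictMonoOn_iff_strictMono.mpr strictAntiOn_iff_strictAnti.mpr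

lemma eq_mul_of_add_of_monotoneOn {c : ℝ → ℝ}
    (hadd : ∀ x y, 0 < x → 0 < y → c (x + y) = c x + c y) (hmono : MonotoneOn c (Ioi 0))
    {x : ℝ} (hx : 0 < x) : c x = c 1 * x := by
  have hc₁ : 0 ≤ c 1 := by
    have := hmono (mem_Ioi.2 one_pos) (mem_Ioi.2 two_pos) one_le_two
    have h₂ := hadd 1 1 one_pos one_pos
    norm_num at h₂
    linarith
  have hnsmul : ∀ n : ℕ, ∀ y, 0 < y → c ((n + 1) * y) = (n + 1) * c y := by
    intro n y hy
    induction n with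
    | zero => simp
    | succ n ih =>
      push_cast
      rw [add_mul, hadd _ _ (by positivity) (by simpa using hy), ih, one_mul]
      ring
  have hbound : ∀ n : ℕ, (n + 1) * |c x - c 1 * x| ≤ c 1 := by
    intro n
    set m := ⌊(n + 1) * x⌋₊
    have hm : (m : ℝ) ≤ (n + 1) * x := Nat.floor_le (by positivity)
    have hm' : (n + 1) * x < m + 1 := Nat.lt_floor_add_one _
    have hupper := hmono (mem_Ioi.2 (by positivity)) (mem_Ioi.2 (by positivity))
      (show (n + 1) * x ≤ (m + 1) * 1 by linarith)
    have hlower := hmono (mem_Ioi.2 (by positivity)) (mem_Ioi.2 (by positivity))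
      (show (m + 1) * 1 ≤ (n + 1) * x + 1 by linarith)
    rw [hnsmul n x hx, hnsmul m 1 one_pos] at hupper
    rw [hnsmul m 1 one_pos, hadd _ _ (by positivity) one_pos, hnsmul n x hx] at hlower
    have hmul₁ := mul_le_mul_of_nonneg_right hm hc₁
    have hmul₂ := mul_le_mul_of_nonneg_right hm'.le hc₁
    rw [← abs_of_pos (show (0:ℝ) < n + 1 by positivity), ← abs_mul, abs_le]
    constructor <;> nlinarith
  by_contra hne
  have hpos : 0 < |c x - c 1 * x| := abs_pos.mpr (sub_ne_zero.mpr hne)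
  obtain ⟨n, hn⟩ := exists_nat_gt (c 1 / |c x - c 1 * x|)
  rw [div_lt_iff₀ hpos] at hn
  nlinarith [hbound n]

lemma eq_affine_of_increments_of_monotoneOn {ψ : ℝ → ℝ}
    (hinc : ∀ T T' Δ, 0 < T → 0 < T' → 0 < Δ → ψ (T + Δ) - ψ T = ψ (T' + Δ) - ψ T')
    (hmono : MonotoneOn ψ (Ioi 0)) {t : ℝ} (ht : 0 < t) :
    ψ t = ψ 1 + (ψ 2 - ψ 1) * (t - 1) := by
  set d : ℝ → ℝ := fun Δ => ψ (1 + Δ) - ψ 1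
  have hadd : ∀ x y, 0 < x → 0 < y → d (x + y) = d x + d y := fun x y hx hy => by
    have := hinc (1 + x) 1 y (by positivity) one_pos hy
    simp only [d, ← add_assoc]
    linarith
  have hdmono : MonotoneOn d (Ioi 0) := fun x hx y hy hxy =>
    sub_le_sub_right (hmono (mem_Ioi.2 (by linarith [mem_Ioi.1 hx]))
      (mem_Ioi.2 (by linarith [mem_Ioi.1 hy])) (by linarith)) _
  have hd := eq_mul_of_add_of_monotoneOn hadd hdmono ht
  have hstep := hinc t 1 1 ht one_pos one_pos
  simp only [d] at hd
  norm_num at hd hstep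
  rw [add_comm] at hd
  linarith

lemma eq_affine_of_increments {ψ : ℝ → ℝ}
    (hinc : ∀ T T' Δ, 0 < T → 0 < T' → 0 < Δ → ψ (T + Δ) - ψ T = ψ (T' + Δ) - ψ T')
    (hmono : MonotoneOn ψ (Ioi 0) ∨ AntitoneOn ψ (Ioi 0)) {t : ℝ} (ht : 0 < t) :
    ψ t = ψ 1 + (ψ 2 - ψ 1) * (t - 1) := by
  rcases hmono with hmono | hanti
  · exact eq_affine_of_increments_of_monotoneOn hinc hmono ht
  · have := eq_affine_of_increments_of_monotoneOn (ψ := -ψ)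
      (fun T T' Δ hT hT' hΔ => by simp only [Pi.neg_apply]; linarith [hinc T T' Δ hT hT' hΔ])
      hanti.neg ht
    simp only [Pi.neg_apply] at this
    linarith

lemma increment_eq_of_pexider {a b : ℝ} (ha : 0 < a) (hb : 0 < b) {K K₁ K₂ : ℝ → ℝ → ℝ}
    (h : ∀ p q r s, 0 < p → 0 < q → 0 < r → 0 < s →
      K (a * p + b * r) (a * q + b * s) = K₁ p q + K₂ r s)
    {P Q P' Q' D : ℝ} (hP : 0 < P) (hQ : 0 < Q) (hP' : 0 < P') (hQ' : 0 < Q') (hD : 0 < D) :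
    K (P + D) Q - K P Q = K (P' + D) Q' - K P' Q' := by
  -- Writing P = a ε + b r, Q = a ε + b s, the `K₂ r s` terms cancel in the increment.
  have key : ∀ ε P Q, 0 < ε → a * ε < P → a * ε < Q →
      K (P + D) Q - K P Q = K₁ (ε + D / a) ε - K₁ ε ε := by
    intro ε P Q hε hP hQ
    have hr : 0 < (P - a * ε) / b := div_pos (by linarith) hb
    have hs : 0 < (Q - a * ε) / b := div_pos (by linarith) hb
    have h₁ := h (ε + D / a) ε _ _ (by positivity) hε hr hs
    have h₂ := h ε ε _ _ hε hε hr hs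
    rw [show a * (ε + D / a) + b * ((P - a * ε) / b) = P + D by field_simp; ring,
      show a * ε + b * ((Q - a * ε) / b) = Q by field_simp; ring] at h₁
    rw [show a * ε + b * ((P - a * ε) / b) = P by field_simp; ring,
      show a * ε + b * ((Q - a * ε) / b) = Q by field_simp; ring] at h₂
    linarith
  set m := min (min P Q) (min P' Q')
  have hm : 0 < m := lt_min (lt_min hP hQ) (lt_min hP' hQ')
  have hε : a * (m / (2 * a)) < m := by
    rw [show a * (m / (2 * a)) = m / 2 by field_simp]
    linarith
  have hmPQ := min_le_left (min P Q) (min P' Q')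
  have hmPQ' := min_le_right (min P Q) (min P' Q')
  rw [key (m / (2 * a)) P Q (by positivity) (by linarith [min_le_left P Q])
      (by linarith [min_le_right P Q]),
    key (m / (2 * a)) P' Q' (by positivity) (by linarith [min_le_left P' Q'])
      (by linarith [min_le_right P' Q'])]

lemma strictMonoOn_or_strictAntiOn_comp_leftInvOn {α β γ : Type*} [LinearOrder α]
    [LinearOrder β] [Preorder γ] {f : α → γ} {g : α → β} {G : β → α} {s : Set α} {t : Set β}
    (hf : StrictMonoOn f s ∨ StrictAntiOn f s) (hg : StrictMonoOn g s ∨ StrictAntiOn g s)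
    (hG : MapsTo G t s) (hgG : LeftInvOn g G t) :
    StrictMonoOn (f ∘ G) t ∨ StrictAntiOn (f ∘ G) t := by
  rcases hg with hg | hg
  · have hGmono : StrictMonoOn G t := fun a ha b hb hab =>
      (hg.lt_iff_lt (hG ha) (hG hb)).1 (by rwa [hgG ha, hgG hb])
    exact hf.imp (·.comp hGmono hG) (·.comp_strictMonoOn hGmono hG)
  · have hGanti : StrictAntiOn G t := fun a ha b hb hab =>
      (hg.lt_iff_gt (hG ha) (hG hb)).1 (by rwa [hgG ha, hgG hb])
    exact (hf.imp (·.comp_strictAntiOn hGanti hG) (·.comp hGanti hG)).symm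

lemma strictMonoOn_mul_rightInvOn_add {φ χ : ℝ → ℝ}
    (hφ : StrictMonoOn φ (Ioi 0) ∨ StrictAntiOn φ (Ioi 0)) (hχ : MapsTo χ (Ioi 0) (Ioi 0))
    (hinv : RightInvOn χ φ (Ioi 0)) {b c : ℝ} (hb : 0 < b) (hc : 0 ≤ c) :
    StrictMonoOn (fun t => φ (b * χ t + c)) (Ioi 0) := by
  intro s hs t ht hst
  have hpos : ∀ u ∈ Ioi (0 : ℝ), b * χ u + c ∈ Ioi (0 : ℝ) := fun u hu =>
    mem_Ioi.2 (by have := mem_Ioi.1 (hχ hu); positivity)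
  have hφχ : φ (χ s) < φ (χ t) := by rwa [hinv hs, hinv ht]
  rcases hφ with hφ | hφ
  · have := (hφ.lt_iff_lt (hχ hs) (hχ ht)).1 hφχ
    exact hφ (hpos s hs) (hpos t ht) (by gcongr)
  · have := (hφ.lt_iff_gt (hχ hs) (hχ ht)).1 hφχ
    exact hφ (hpos t ht) (hpos s hs) (by gcongr)

lemma eq_affine₂_of_pexider {a b : ℝ} (ha : 0 < a) (hb : 0 < b) {K : ℝ → ℝ → ℝ}
    (h : ∀ p q r s, 0 < p → 0 < q → 0 < r → 0 < s →
      K (a * p + b * r) (a * q + b * s) = a * K p q + b * K r s)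
    (hmono₁ : ∀ Q, 0 < Q → MonotoneOn (K · Q) (Ioi 0))
    (hmono₂ : ∀ P, 0 < P → MonotoneOn (K P) (Ioi 0)) {P Q : ℝ} (hP : 0 < P) (hQ : 0 < Q) :
    K P Q = K 1 1 + (K 2 1 - K 1 1) * (P - 1) + (K 1 2 - K 1 1) * (Q - 1) := by
  have hinc₁ : ∀ {P Q P' Q' D : ℝ}, 0 < P → 0 < Q → 0 < P' → 0 < Q' → 0 < D →
      K (P + D) Q - K P Q = K (P' + D) Q' - K P' Q' :=
    increment_eq_of_pexider ha hb (K₁ := fun p q => a * K p q) (K₂ := fun r s => b * K r s) h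
  have hinc₂ : ∀ {P Q P' Q' D : ℝ}, 0 < P → 0 < Q → 0 < P' → 0 < Q' → 0 < D →
      K Q (P + D) - K Q P = K Q' (P' + D) - K Q' P' :=
    increment_eq_of_pexider ha hb (K := fun p q => K q p) (K₁ := fun p q => a * K q p)
      (K₂ := fun r s => b * K s r) (fun p q r s hp hq hr hs => h q p s r hq hp hs hr)
  have haffP := eq_affine_of_increments_of_monotoneOn (ψ := (K · Q))
    (fun T T' Δ hT hT' hΔ => hinc₁ hT hQ hT' hQ hΔ) (hmono₁ Q hQ) hP
  have haffQ := eq_affine_of_increments_of_monotoneOn (ψ := K 1)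
    (fun T T' Δ hT hT' hΔ => hinc₂ hT one_pos hT' one_pos hΔ) (hmono₂ 1 one_pos) hQ
  have hslope := hinc₁ one_pos hQ one_pos one_pos one_pos
  norm_num at hslope
  linear_combination haffP + (P - 1) * hslope + haffQ

lemma slope_pos_and_intercept_eq_zero {φ : ℝ → ℝ} {l k : ℝ}
    (hφ : ∀ t, 0 < t → φ t = l * t + k) (hmaps : MapsTo φ (Ioi 0) (Ioi 0))
    (hsurj : SurjOn φ (Ioi 0) (Ioi 0)) : 0 < l ∧ k = 0 := by
  have hpos : ∀ t, 0 < t → 0 < l * t + k := fun t ht => hφ t ht ▸ hmaps ht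
  have hk : k = 0 := by
    rcases lt_trichotomy k 0 with hk | hk | hk
    · have hl : 0 < l := by linarith [hpos 1 one_pos]
      have := hpos (-k / (2 * l)) (div_pos (by linarith) (by positivity))
      rw [show l * (-k / (2 * l)) = -k / 2 by field_simp] at this
      linarith
    · exact hk
    · obtain ⟨t, ht, hφt⟩ := hsurj (mem_Ioi.2 (half_pos hk))
      rw [hφ t ht] at hφt
      have hl : l < 0 := by nlinarith [mem_Ioi.1 ht]
      have := hpos (2 * k / -l) (div_pos (by positivity) (by linarith))
      rw [show l * (2 * k / -l) = -(2 * k) by field_simp [hl.ne]] at this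
      linarith
  exact ⟨by simpa [hk] using hpos 1 one_pos, hk⟩

theorem exists_eq_mul_of_bisymmetric {φ χ : ℝ → ℝ} {α₁ α₂ β₁ β₂ : ℝ}
    (hα₁ : 0 < α₁) (hα₂ : 0 < α₂) (hβ₁ : 0 < β₁) (hβ₂ : 0 < β₂)
    (hφ : MapsTo φ (Ioi 0) (Ioi 0)) (hχ : MapsTo χ (Ioi 0) (Ioi 0))
    (hinv : InvOn χ φ (Ioi 0) (Ioi 0)) (hmono : StrictMonoOn φ (Ioi 0) ∨ StrictAntiOn φ (Ioi 0))
    (h : ∀ p q r s, 0 < p → 0 < q → 0 < r → 0 < s →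
      φ (β₁ * χ (α₁ * p + α₂ * r) + β₂ * χ (α₁ * q + α₂ * s)) =
        α₁ * φ (β₁ * χ p + β₂ * χ q) + α₂ * φ (β₁ * χ r + β₂ * χ s)) :
    ∃ c, 0 < c ∧ ∀ t, 0 < t → φ t = c * t := by
  set K : ℝ → ℝ → ℝ := fun p q => φ (β₁ * χ p + β₂ * χ q)
  have hK : ∀ P Q, 0 < P → 0 < Q →
      K P Q = K 1 1 + (K 2 1 - K 1 1) * (P - 1) + (K 1 2 - K 1 1) * (Q - 1) :=
    fun P Q hP hQ => eq_affine₂_of_pexider hα₁ hα₂ (K := K) h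
      (fun Q hQ => (strictMonoOn_mul_rightInvOn_add hmono hχ hinv.2 hβ₁
        (mul_pos hβ₂ (hχ hQ)).le).monotoneOn)
      (fun P hP => by
        simpa only [K, add_comm (β₁ * χ P)] using (strictMonoOn_mul_rightInvOn_add hmono hχ
          hinv.2 hβ₂ (mul_pos hβ₁ (hχ hP)).le).monotoneOn)
      hP hQ
  have hpexider : ∀ p q r s : ℝ, 0 < p → 0 < q → 0 < r → 0 < s → φ (β₁ * p + β₂ * r) =
      (K 1 1 + (K 2 1 - K 1 1) * (φ p - 1)) + (K 1 2 - K 1 1) * (φ r - 1) :=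
    fun p _ r _ hp _ hr _ => by
      rw [← hK _ _ (hφ hp) (hφ hr)]
      simp only [K, hinv.1 hp, hinv.1 hr]
  -- the one-variable equation, read as a two-variable one that ignores its second variable
  have haff := fun {t} (ht : 0 < t) => eq_affine_of_increments
    (fun T T' Δ hT hT' hΔ => increment_eq_of_pexider hβ₁ hβ₂ (K := fun P _ => φ P)
      (K₁ := fun p _ => K 1 1 + (K 2 1 - K 1 1) * (φ p - 1))
      (K₂ := fun r _ => (K 1 2 - K 1 1) * (φ r - 1)) hpexider hT one_pos hT' one_pos hΔ)
    (hmono.imp StrictMonoOn.monotoneOn StrictAntiOn.antitoneOn) ht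
  obtain ⟨hslope, hintercept⟩ := slope_pos_and_intercept_eq_zero (l := φ 2 - φ 1)
    (k := 2 * φ 1 - φ 2) (fun t ht => (haff ht).trans (by ring)) hφ (hinv.2.surjOn hχ)
  exact ⟨_, hslope, fun t ht => by rw [haff ht]; linarith⟩

theorem stmt_9_general (I : Set ℝ) (hIordconn : I.OrdConnected)
    (f g F G : ℝ → ℝ) (α₁ α₂ β₁ β₂ : ℝ)
    (hα₁ : 0 < α₁) (hα₂ : 0 < α₂) (hβ₁ : 0 < β₁) (hβ₂ : 0 < β₂)
    (hfbij : Set.BijOn f I (Set.Ioi (0:ℝ))) (hfcont : ContinuousOn f I)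
    (hgbij : Set.BijOn g I (Set.Ioi (0:ℝ))) (hgcont : ContinuousOn g I)
    (hFf : ∀ x ∈ I, F (f x) = x) (hfF : ∀ t : ℝ, 0 < t → f (F t) = t)
    (hGg : ∀ x ∈ I, G (g x) = x) (hgG : ∀ t : ℝ, 0 < t → g (G t) = t)
    (heq : ∀ x ∈ I, ∀ y ∈ I, ∀ z ∈ I, ∀ w ∈ I,
      F (α₁ * f (G (β₁ * g x + β₂ * g y)) + α₂ * f (G (β₁ * g z + β₂ * g w))) =
      G (β₁ * g (F (α₁ * f x + α₂ * f z)) + β₂ * g (F (α₁ * f y + α₂ * f w)))) :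
    ∃ c : ℝ, 0 < c ∧ ∀ x ∈ I, f x = c * g x := by
  have hF : MapsTo F (Ioi 0) I := LeftInvOn.mapsTo hFf hfbij.surjOn
  have hG : MapsTo G (Ioi 0) I := LeftInvOn.mapsTo hGg hgbij.surjOn
  have hφ : MapsTo (f ∘ G) (Ioi 0) (Ioi 0) := hfbij.mapsTo.comp hG
  have hmono := strictMonoOn_or_strictAntiOn_comp_leftInvOn
    (hfcont.strictMonoOn_or_strictAntiOn_of_injOn hIordconn hfbij.injOn)
    (hgcont.strictMonoOn_or_strictAntiOn_of_injOn hIordconn hgbij.injOn) hG hgG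
  obtain ⟨c, hc, hφc⟩ := exists_eq_mul_of_bisymmetric hα₁ hα₂ hβ₁ hβ₂ hφ
    (hgbij.mapsTo.comp hF) (InvOn.comp ⟨hgG, hGg⟩ ⟨hFf, hfF⟩ hG hF) hmono
    (fun p q r s hp hq hr hs => by
      have H := heq (F p) (hF hp) (F q) (hF hq) (F r) (hF hr) (F s) (hF hs)
      rw [hfF p hp, hfF q hq, hfF r hr, hfF s hs] at H
      have hχ : ∀ u v, 0 < u → 0 < v → 0 < β₁ * g (F u) + β₂ * g (F v) := fun u v hu hv =>
        add_pos (mul_pos hβ₁ (hgbij.mapsTo (hF hu))) (mul_pos hβ₂ (hgbij.mapsTo (hF hv)))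
      simp only [Function.comp_apply]
      rw [← H]
      exact hfF _ (add_pos (mul_pos hα₁ (hφ (hχ p q hp hq))) (mul_pos hα₂ (hφ (hχ r s hr hs)))))
  exact ⟨c, hc, fun x hx => by simpa [hGg x hx] using hφc (g x) (hgbij.mapsTo hx)⟩

theorem stmt_9 (I : Set ℝ) (hI : I.Nonempty) (hIordconn : I.OrdConnected)
    (f g F G : ℝ → ℝ) (α₁ α₂ β₁ β₂ : ℝ)
    (hα₁ : 0 < α₁) (hα₂ : 0 < α₂) (hβ₁ : 0 < β₁) (hβ₂ : 0 < β₂)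
    (hfbij : Set.BijOn f I (Set.Ioi (0:ℝ))) (hfcont : ContinuousOn f I)
    (hgbij : Set.BijOn g I (Set.Ioi (0:ℝ))) (hgcont : ContinuousOn g I)
    (hFf : ∀ x ∈ I, F (f x) = x) (hfF : ∀ t : ℝ, 0 < t → f (F t) = t)
    (hGg : ∀ x ∈ I, G (g x) = x) (hgG : ∀ t : ℝ, 0 < t → g (G t) = t)
    (heq : ∀ x ∈ I, ∀ y ∈ I, ∀ z ∈ I, ∀ w ∈ I,
      F (α₁ * f (G (β₁ * g x + β₂ * g y)) + α₂ * f (G (β₁ * g z + β₂ * g w))) =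
      G (β₁ * g (F (α₁ * f x + α₂ * f z)) + β₂ * g (F (α₁ * f y + α₂ * f w)))) :
    ∃ c : ℝ, 0 < c ∧ ∀ x ∈ I, f x = c * g x :=
  stmt_9_general I hIordconn f g F G α₁ α₂ β₁ β₂ hα₁ hα₂ hβ₁ hβ₂ hfbij hfcont hgbij hgcont hFf hfF
    hGg hgG heq
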